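/- arXiv:0907.2501 — 2 statements merged into one kernel-verified Lean document; each statement's English description precedes it below -/
import Mathlib

section
/- Let h₁ = √2·1_{[0,1/2]}, h₂ = √2·1_{[1/2,1]}, and X = W(h₁)·sign(W(h₂)). Then the quadratic variation at time 1 of the martingale M^X_t = E[X|F_t] is not almost surely bounded by 1. -/
/-!
`M_1 = X`, while `M_{1/2} = 0` because `sign(W_1 - W_{1/2})` is centred and independent of
`ℱ_{1/2}`. As `M² - ⟨M⟩` is a martingale and `⟨M⟩` is nonnegative and nondecreasing,
`⟨M⟩_1 ≤ 1` forces `E[M_1² | ℱ_{1/2}] ≤ M_{1/2}² + 1 = 1`. But `M_1² = X² = 2 W_{1/2}²` is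
`ℱ_{1/2}`-measurable, so `2 W_{1/2}² ≤ 1` almost surely, which is impossible for the
nondegenerate Gaussian `W_{1/2}`.
-/

open MeasureTheory ProbabilityTheory Filter Topology
open scoped NNReal

noncomputable section

/-- `B` is a Brownian motion with respect to the filtration `𝓖` under `μ`. -/
def IsBrownianMotion {Ω : Type} {m0 : MeasurableSpace Ω} (μ : Measure Ω)
    (𝓖 : Filtration ℝ≥0 m0) (B : ℝ≥0 → Ω → ℝ) : Prop :=
  (∀ t, Measurable[𝓖 t] (B t)) ∧
  (∀ᵐ ω ∂μ, B 0 ω = 0) ∧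
  (∀ᵐ ω ∂μ, Continuous fun t => B t ω) ∧
  (∀ s t : ℝ≥0, s ≤ t → μ.map (fun ω => B t ω - B s ω) = gaussianReal 0 (t - s)) ∧
  (∀ s t : ℝ≥0, s ≤ t →
    Indep (𝓖 s) (MeasurableSpace.comap (fun ω => B t ω - B s ω) inferInstance) μ)

/-- `A` is the quadratic variation process of `M` (Doob–Meyer characterization). -/
def IsQuadraticVariation {Ω : Type} {m0 : MeasurableSpace Ω} (μ : Measure Ω)
    (ℱ : Filtration ℝ≥0 m0) (M A : ℝ≥0 → Ω → ℝ) : Prop :=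
  Adapted ℱ A ∧
  (∀ᵐ ω ∂μ, A 0 ω = 0 ∧ Monotone (fun t => A t ω) ∧ Continuous fun t => A t ω) ∧
  Martingale (fun t ω => (M t ω) ^ 2 - A t ω) ℱ μ

/-- The sign function, equal to `1` for `x ≥ 0` and `-1` for `x < 0`. -/
def sgn (x : ℝ) : ℝ := if 0 ≤ x then 1 else -1

lemma sgn_sq (x : ℝ) : sgn x ^ 2 = 1 := by unfold sgn; split <;> norm_num

lemma abs_sgn (x : ℝ) : |sgn x| = 1 := by unfold sgn; split <;> norm_num

lemma measurable_sgn : Measurable sgn :=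
  Measurable.ite (measurableSet_le measurable_const measurable_id) measurable_const measurable_const

lemma sgn_mul_of_pos {c : ℝ} (hc : 0 < c) (x : ℝ) : sgn (c * x) = sgn x := by
  simp only [sgn, mul_nonneg_iff_of_pos_left hc]

lemma sgn_neg_of_ne_zero {x : ℝ} (hx : x ≠ 0) : sgn (-x) = -sgn x := by
  rcases hx.lt_or_gt with h | h <;> simp [sgn, h.le, not_le.mpr h]

lemma integral_sgn_gaussianReal {v : ℝ≥0} (hv : v ≠ 0) : ∫ x, sgn x ∂gaussianReal 0 v = 0 := by
  have hneg : HasLaw (fun x => -x) (gaussianReal 0 v) (gaussianReal 0 v) := by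
    simpa [Pi.neg_def] using gaussianReal_neg (HasLaw.id (μ := gaussianReal 0 v))
  have hodd : ∫ x, sgn (-x) ∂gaussianReal 0 v = -∫ x, sgn x ∂gaussianReal 0 v := by
    rw [← integral_neg]
    refine integral_congr_ae ?_
    filter_upwards [(gaussianReal_absolutelyContinuous 0 hv).ae_le (Measure.ae_ne volume 0)]
      with x hx using sgn_neg_of_ne_zero hx
  have hsymm := hneg.integral_comp measurable_sgn.aestronglyMeasurable
  simp only [Function.comp_def] at hsymm
  linarith

lemma ProbabilityTheory.HasLaw.not_ae_le_of_gaussianReal {Ω : Type*} {mΩ : MeasurableSpace Ω}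
    {μ : Measure Ω} {Y : Ω → ℝ} {m : ℝ} {v : ℝ≥0} (hY : HasLaw Y (gaussianReal m v) μ)
    (hv : v ≠ 0) (a : ℝ) :
    ¬ ∀ᵐ ω ∂μ, Y ω ≤ a := by
  intro hle
  have hIoi : gaussianReal m v (Set.Ioi a) = 0 := by
    rw [show Set.Ioi a = {x | a < x} from rfl, ← hY.measure_eq measurableSet_Ioi]
    simpa [ae_iff] using hle
  simpa [Real.volume_Ioi] using gaussianReal_absolutelyContinuous' m hv hIoi

namespace IsBrownianMotion

variable {Ω : Type} {m0 : MeasurableSpace Ω} {μ : Measure Ω} {ℱ : Filtration ℝ≥0 m0}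
  {W : ℝ≥0 → Ω → ℝ}

lemma measurable (hW : IsBrownianMotion μ ℱ W) (t : ℝ≥0) : Measurable (W t) :=
  (hW.1 t).mono (ℱ.le t) le_rfl

lemma hasLaw_sub (hW : IsBrownianMotion μ ℱ W) {s t : ℝ≥0} (hst : s ≤ t) :
    HasLaw (fun ω => W t ω - W s ω) (gaussianReal 0 (t - s)) μ :=
  ⟨((hW.measurable t).sub (hW.measurable s)).aemeasurable, hW.2.2.2.1 s t hst⟩

lemma hasLaw (hW : IsBrownianMotion μ ℱ W) (t : ℝ≥0) : HasLaw (W t) (gaussianReal 0 t) μ := by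
  have h := hW.hasLaw_sub (zero_le : 0 ≤ t)
  rw [tsub_zero] at h
  exact h.congr (by filter_upwards [hW.2.1] with ω h0 using by simp [h0])

lemma integrable (hW : IsBrownianMotion μ ℱ W) (t : ℝ≥0) : Integrable (W t) μ :=
  memLp_one_iff_integrable.mp <| (memLp_id_gaussianReal 1).comp_measurePreserving
    ((hW.hasLaw t).measurePreserving (hW.measurable t))

lemma condExp_mul_sgn_sub_eq_zero [IsFiniteMeasure μ] (hW : IsBrownianMotion μ ℱ W)
    {s t : ℝ≥0} (hst : s < t) {f : Ω → ℝ} (hf : StronglyMeasurable[ℱ s] f)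
    (hfg : Integrable (fun ω => f ω * sgn (W t ω - W s ω)) μ) :
    μ[fun ω => f ω * sgn (W t ω - W s ω) | ℱ s] =ᵐ[μ] 0 := by
  set D : Ω → ℝ := fun ω => W t ω - W s ω
  have hDm : Measurable D := (hW.measurable t).sub (hW.measurable s)
  have hg : StronglyMeasurable[MeasurableSpace.comap D inferInstance] (sgn ∘ D) :=
    (measurable_sgn.comp (comap_measurable D)).stronglyMeasurable
  have hg_int : Integrable (sgn ∘ D) μ :=
    (integrable_const (1 : ℝ)).mono' (measurable_sgn.comp hDm).aestronglyMeasurable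
      (ae_of_all _ fun ω => (abs_sgn _).le)
  have hmean : μ[sgn ∘ D] = 0 := by
    rw [(hW.hasLaw_sub hst.le).integral_comp measurable_sgn.aestronglyMeasurable]
    exact integral_sgn_gaussianReal (tsub_pos_of_lt hst).ne'
  have hcond : μ[sgn ∘ D | ℱ s] =ᵐ[μ] fun _ => 0 := by
    rw [← hmean]
    exact condExp_indep_eq hDm.comap_le (ℱ.le s) hg (hW.2.2.2.2 s t hst.le).symm
  change μ[f * (sgn ∘ D) | ℱ s] =ᵐ[μ] 0
  filter_upwards [condExp_mul_of_stronglyMeasurable_left (g := sgn ∘ D) hf hfg hg_int, hcond]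
    with ω h1 h2
  rw [h1, Pi.mul_apply, h2, mul_zero, Pi.zero_apply]

end IsBrownianMotion

namespace IsQuadraticVariation

variable {Ω : Type} {m0 : MeasurableSpace Ω} {μ : Measure Ω} {ℱ : Filtration ℝ≥0 m0}
  {M A : ℝ≥0 → Ω → ℝ}

lemma ae_nonneg (hA : IsQuadraticVariation μ ℱ M A) : ∀ᵐ ω ∂μ, ∀ t, 0 ≤ A t ω := by
  filter_upwards [hA.2.1] with ω ⟨h0, hmono, _⟩ t
  exact h0 ▸ hmono (zero_le : 0 ≤ t)

variable [IsFiniteMeasure μ]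

lemma integrable_of_ae_le (hA : IsQuadraticVariation μ ℱ M A) {t : ℝ≥0} {c : ℝ}
    (hc : ∀ᵐ ω ∂μ, A t ω ≤ c) : Integrable (A t) μ := by
  refine (integrable_const c).mono' ((hA.1 t).mono (ℱ.le t) le_rfl).aestronglyMeasurable ?_
  filter_upwards [hc, hA.ae_nonneg] with ω hle hnn
  rw [Real.norm_eq_abs, abs_of_nonneg (hnn t)]
  exact hle

lemma integrable_sq_of_ae_le (hA : IsQuadraticVariation μ ℱ M A) {t : ℝ≥0} {c : ℝ}
    (hc : ∀ᵐ ω ∂μ, A t ω ≤ c) : Integrable (fun ω => M t ω ^ 2) μ := by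
  refine ((hA.2.2.integrable t).add (hA.integrable_of_ae_le hc)).congr (ae_of_all _ fun ω => ?_)
  simp

lemma condExp_sq_le (hA : IsQuadraticVariation μ ℱ M A) {s t : ℝ≥0} (hst : s ≤ t) {c : ℝ}
    (hc : ∀ᵐ ω ∂μ, A t ω ≤ c) :
    μ[fun ω => M t ω ^ 2 | ℱ s] ≤ᵐ[μ] fun ω => M s ω ^ 2 + c := by
  have hsplit : (fun ω => M t ω ^ 2) = (fun ω => M t ω ^ 2 - A t ω) + A t := by
    ext ω; simp
  have hAt := hA.integrable_of_ae_le hc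
  have hAc := condExp_mono (m := ℱ s) hAt (integrable_const c) hc
  rw [condExp_const (ℱ.le s)] at hAc
  rw [hsplit]
  filter_upwards [condExp_add (hA.2.2.integrable t) hAt (ℱ s), hA.2.2.condExp_ae_eq hst, hAc,
    hA.ae_nonneg] with ω hadd hmart hle hnn
  rw [hadd, Pi.add_apply, hmart]
  linarith [hnn s]

end IsQuadraticVariation

theorem stmt_8_general {Ω : Type} {m0 : MeasurableSpace Ω} (μ : Measure Ω) [IsProbabilityMeasure μ]
    (W : ℝ≥0 → Ω → ℝ)
    (ℱ : Filtration ℝ≥0 m0)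
    (hW : IsBrownianMotion μ ℱ W)
    (X : Ω → ℝ)
    (hX : X = fun ω => (Real.sqrt 2 * W (1/2) ω) * sgn (Real.sqrt 2 * (W 1 ω - W (1/2) ω)))
    (A : ℝ≥0 → Ω → ℝ)
    (hA : IsQuadraticVariation μ ℱ (fun t => μ[X|ℱ t]) A) :
    ¬ (∀ᵐ ω ∂μ, A 1 ω ≤ 1) := by
  intro hA1
  have half_lt_one : (1/2 : ℝ≥0) < 1 := by norm_num
  have hXeq : X = fun ω => Real.sqrt 2 * W (1/2) ω * sgn (W 1 ω - W (1/2) ω) := by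
    simp only [hX, sgn_mul_of_pos (Real.sqrt_pos.mpr two_pos)]
  have hX1 : StronglyMeasurable[ℱ 1] X := by
    have hWhalf := (hW.1 (1/2)).mono (ℱ.mono half_lt_one.le) le_rfl
    rw [hXeq]
    exact ((hWhalf.const_mul _).mul (measurable_sgn.comp ((hW.1 1).sub hWhalf))).stronglyMeasurable
  have hXint : Integrable X μ :=
    hXeq ▸ ((hW.integrable _).const_mul _).mul_bdd
      (measurable_sgn.comp ((hW.measurable 1).sub (hW.measurable _))).aestronglyMeasurable
      (ae_of_all _ fun ω => (abs_sgn _).le)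
  have hM1 : μ[X|ℱ 1] = X := condExp_of_stronglyMeasurable (ℱ.le 1) hX1 hXint
  have hMhalf : μ[X|ℱ (1/2)] =ᵐ[μ] 0 := hXeq ▸ hW.condExp_mul_sgn_sub_eq_zero half_lt_one
    ((hW.1 _).const_mul _).stronglyMeasurable (hXeq ▸ hXint)
  have hXsq : (fun ω => X ω ^ 2) = fun ω => 2 * W (1/2) ω ^ 2 := by
    ext ω
    rw [hXeq, mul_pow, sgn_sq, mul_pow, Real.sq_sqrt zero_le_two, mul_one]
  have hcond : μ[fun ω => X ω ^ 2 | ℱ (1/2)] = fun ω => 2 * W (1/2) ω ^ 2 := by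
    rw [hXsq]
    refine condExp_of_stronglyMeasurable (ℱ.le _)
      (((hW.1 _).pow_const 2).const_mul 2).stronglyMeasurable ?_
    simpa [hM1, hXsq] using hA.integrable_sq_of_ae_le hA1
  have hle := hA.condExp_sq_le half_lt_one.le hA1
  simp only [hM1, hcond] at hle
  refine (hW.hasLaw (1/2)).not_ae_le_of_gaussianReal (by norm_num) 1 ?_
  filter_upwards [hle, hMhalf] with ω hω h0
  simp only [h0, Pi.zero_apply] at hω
  nlinarith

/-- For `h₁ = √2·1_{[0,1/2]}`, `h₂ = √2·1_{[1/2,1]}` and `X = W(h₁)·sign(W(h₂))` (so that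
`W(h₁) = √2·W_{1/2}` and `W(h₂) = √2·(W₁ - W_{1/2})`), the quadratic variation at time `1`
of the martingale `M^X_t = E[X | ℱ_t]` is not a.s. bounded by `1`. -/
theorem stmt_8 {Ω : Type} {m0 : MeasurableSpace Ω} (μ : Measure Ω) [IsProbabilityMeasure μ]
    (W : ℝ≥0 → Ω → ℝ) (hWsm : ∀ t, StronglyMeasurable (W t))
    (ℱ : Filtration ℝ≥0 m0) (hℱ : ℱ = Filtration.natural W hWsm)
    (hW : IsBrownianMotion μ ℱ W)
    (X : Ω → ℝ)
    (hX : X = fun ω => (Real.sqrt 2 * W (1/2) ω) * sgn (Real.sqrt 2 * (W 1 ω - W (1/2) ω)))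
    (A : ℝ≥0 → Ω → ℝ)
    (hA : IsQuadraticVariation μ ℱ (fun t => μ[X|ℱ t]) A) :
    ¬ (∀ᵐ ω ∂μ, A 1 ω ≤ 1) :=
  stmt_8_general μ W ℱ hW X hX A hA
end
end

section
/- Fix N ≥ 1 and let g ∈ L²([0,1]^{N+1}) be symmetric in its first N variables. If ∫₀¹ g(·,s) ⊗̃ g(·,s) ds = 0 almost everywhere on [0,1]^{2N} (where ⊗̃ denotes the symmetrized tensor product), then for every k = 1, …, N−1, ∫₀¹ g(·,s) ⊗̃_k g(·,s) ds = 0 almost everywhere on [0,1]^{2N−2k}. -/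
/-!
The hypothesis already forces `g = 0` almost everywhere, and then every contraction vanishes.
For bounded measurable `w`, pairing the symmetrized contraction with the symmetric function
`z ↦ ∏ᵢ w(zᵢ)` on `[0,1]^{2N}` gives `∫₀¹ (∫ g(x,s) ∏ᵢ w(xᵢ) dx)² ds = 0`, so
`∫ g(x,s) ∏ᵢ w(xᵢ) dx = 0` for a.e. `s`. Taking `w = ∑_{j ∈ S} 1_{B_j}` and running
inclusion–exclusion over `S` isolates the sum over permutations `σ` of
`∫ g(x,s) ∏ᵢ 1_{B_{σ i}}(xᵢ) dx`; by the symmetry of `g` each term is the integral of `g(·,s)`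
over the box `∏ᵢ B_i`. Hence `g` integrates to zero over every `(∏ᵢ B_i) × J`, and these sets
form a generating π-system.
-/

open MeasureTheory ProbabilityTheory Filter Topology
open scoped NNReal

noncomputable section

/-- Lebesgue measure restricted to `[0,1]`. -/
def unifMeas : Measure ℝ := volume.restrict (Set.Icc (0:ℝ) 1)

/-- The product measure on `[0,1]ⁿ`. -/
def cubeMeas (n : ℕ) : Measure (Fin n → ℝ) := Measure.pi fun _ => unifMeas

/-- Splice a vector of `N - k` variables with a vector of `k` variables into a vector of `N`
variables. -/
def splice (N k : ℕ) (x : Fin (N - k) → ℝ) (u : Fin k → ℝ) : Fin N → ℝ :=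
  fun i => if h : (i : ℕ) < N - k then x ⟨i, h⟩ else u ⟨(i : ℕ) - (N - k), by omega⟩

/-- The (unsymmetrized) `k`-th contraction integral
`z ↦ ∫₀¹ (g(·,s) ⊗_k g(·,s))(z) ds` on `[0,1]^{2(N-k)}`, where the contraction integrates
out `k` common variables. -/
def contrInt (N k : ℕ) (g : (Fin N → ℝ) → ℝ → ℝ) (z : Fin (2 * (N - k)) → ℝ) : ℝ :=
  ∫ s in Set.Icc (0:ℝ) 1,
    (∫ u : Fin k → ℝ,
      g (splice N k (fun j => z (Fin.castLE (by omega) j)) u) s *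
      g (splice N k (fun j => z ⟨(N - k) + (j : ℕ), by omega⟩) u) s ∂(cubeMeas k))
    ∂volume

/-- Symmetrization of a function of `n` real variables. -/
def symmetrize (n : ℕ) (F : (Fin n → ℝ) → ℝ) : (Fin n → ℝ) → ℝ :=
  fun z => (n.factorial : ℝ)⁻¹ * ∑ σ : Equiv.Perm (Fin n), F (z ∘ σ)

instance : IsProbabilityMeasure unifMeas :=
  ⟨by simp [unifMeas, Real.volume_Icc]⟩

instance (n : ℕ) : IsProbabilityMeasure (cubeMeas n) := by
  unfold cubeMeas; infer_instance

section PiMeasure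

variable {α : Type*} [MeasurableSpace α] (μ : Measure α) [SigmaFinite μ]

theorem measurePreserving_comp_perm {ι : Type*} [Fintype ι] (σ : Equiv.Perm ι) :
    MeasurePreserving (fun z : ι → α => z ∘ σ) (Measure.pi fun _ => μ)
      (Measure.pi fun _ => μ) :=
  measurePreserving_arrowCongr' (fun _ => μ) (fun _ => μ) σ.symm (MeasurableEquiv.refl α)
    fun _ => MeasurePreserving.id μ

variable (α) in
def MeasurableEquiv.piFinSplit {a b n : ℕ} (h : a + b = n) :
    (Fin n → α) ≃ᵐ (Fin a → α) × (Fin b → α) :=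
  (MeasurableEquiv.piCongrLeft (fun _ => α) (finSumFinEquiv.trans (finCongr h))).symm.trans
    (MeasurableEquiv.sumPiEquivProdPi fun _ => α)

theorem measurePreserving_piFinSplit {a b n : ℕ} (h : a + b = n) :
    MeasurePreserving (MeasurableEquiv.piFinSplit α h) (Measure.pi fun _ => μ)
      ((Measure.pi fun _ => μ).prod (Measure.pi fun _ => μ)) :=
  (measurePreserving_sumPiEquivProdPi fun _ => μ).comp
    ((measurePreserving_piCongrLeft (fun _ => μ) _).symm _)

theorem piFinSplit_apply_fst {a b n : ℕ} (h : a + b = n) (z : Fin n → α) (j : Fin a) :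
    (MeasurableEquiv.piFinSplit α h z).1 j = z ⟨j, by omega⟩ := rfl

theorem piFinSplit_apply_snd {a b n : ℕ} (h : a + b = n) (z : Fin n → α) (j : Fin b) :
    (MeasurableEquiv.piFinSplit α h z).2 j = z ⟨a + j, by omega⟩ := rfl

theorem prod_piFinSplit {M : Type*} [CommMonoid M] {a b n : ℕ} (h : a + b = n) (f : α → M)
    (z : Fin n → α) :
    ∏ i, f (z i) = (∏ j, f ((MeasurableEquiv.piFinSplit α h z).1 j)) *
      ∏ j, f ((MeasurableEquiv.piFinSplit α h z).2 j) := by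
  rw [← (finSumFinEquiv.trans (finCongr h)).prod_comp, Fintype.prod_sum_type]
  rfl

end PiMeasure

theorem abs_prod_le_pow {ι : Type*} [Fintype ι] {f : ι → ℝ} {C : ℝ} (hf : ∀ i, |f i| ≤ C) :
    |∏ i, f i| ≤ C ^ Fintype.card ι := by
  rw [Finset.abs_prod, ← Finset.card_univ, ← Finset.prod_const]
  exact Finset.prod_le_prod (fun i _ => abs_nonneg _) fun i _ => hf i

theorem abs_indicator_one_le {α : Type*} (s : Set α) (a : α) :
    |s.indicator (1 : α → ℝ) a| ≤ 1 := by
  by_cases h : a ∈ s <;> simp [h]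

theorem MeasureTheory.Integrable.mul_prod_of_bdd {ι T : Type*} [Fintype ι] [MeasurableSpace T]
    {μ : Measure ((ι → ℝ) × T)} {G : (ι → ℝ) × T → ℝ} (hG : Integrable G μ)
    {w : ι → ℝ → ℝ} (hw : ∀ i, Measurable (w i)) {C : ℝ} (hC : ∀ i t, |w i t| ≤ C) :
    Integrable (fun p => G p * ∏ i, w i (p.1 i)) μ :=
  hG.mul_bdd (Finset.measurable_prod _ fun i _ =>
      (hw i).comp ((measurable_pi_apply i).comp measurable_fst)).aestronglyMeasurable
    (ae_of_all _ fun p => abs_prod_le_pow fun i => hC i (p.1 i))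

theorem Finset.sum_perm_eq_zero_of_sum_piFinset_eq_zero {ι G : Type*} [Fintype ι]
    [DecidableEq ι] [AddCommGroup G] (J : (ι → ι) → G)
    (h : ∀ S : Finset ι, ∑ m ∈ Fintype.piFinset fun _ => S, J m = 0) :
    ∑ σ : Equiv.Perm ι, J σ = 0 := by
  set missing : ι → Finset (ι → ι) := fun j => {m | ∀ i, m i ≠ j}
  set coeEmb : Equiv.Perm ι ↪ (ι → ι) := ⟨(⇑), DFunLike.coe_injective⟩
  have hperm : Finset.univ.map coeEmb = Finset.univ.inf fun j => (missing j)ᶜ := by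
    ext m
    simp only [Finset.mem_map, Finset.mem_univ, true_and, Finset.mem_inf, Finset.mem_compl,
      missing, Finset.mem_filter, not_forall, not_not, forall_const, coeEmb,
      Function.Embedding.coeFn_mk]
    refine ⟨fun ⟨σ, hσ⟩ j => hσ ▸ σ.surjective j, fun hm => ?_⟩
    have hsurj : Function.Surjective m := hm
    exact ⟨Equiv.ofBijective m ⟨Finite.injective_iff_surjective.2 hsurj, hsurj⟩, rfl⟩
  have hinf (t : Finset ι) : t.inf missing = Fintype.piFinset fun _ => tᶜ := by
    ext m
    simp only [Finset.mem_inf, missing, Finset.mem_filter, Finset.mem_univ, true_and,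
      Fintype.mem_piFinset, Finset.mem_compl]
    exact ⟨fun hm i hi => hm _ hi i rfl, fun hm j hj i hij => hm i (hij ▸ hj)⟩
  calc ∑ σ : Equiv.Perm ι, J σ = ∑ m ∈ Finset.univ.map coeEmb, J m :=
        (Finset.sum_map Finset.univ coeEmb J).symm
    _ = 0 := by simp [hperm, Finset.inclusion_exclusion_sum_inf_compl, hinf, h]

section Gram

variable {X T : Type*} [MeasurableSpace X] [MeasurableSpace T] {μ : Measure X}
  [IsProbabilityMeasure μ] {ν : Measure T} [SigmaFinite ν] {H : X × T → ℝ}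

theorem integrable_mul_of_memLp_two (hH : MemLp H 2 (μ.prod ν)) :
    Integrable (fun q : (X × X) × T => H (q.1.1, q.2) * H (q.1.2, q.2)) ((μ.prod μ).prod ν) :=
  (hH.comp_measurePreserving (measurePreserving_fst.prod (.id ν))).integrable_mul
    (hH.comp_measurePreserving (measurePreserving_snd.prod (.id ν)))

theorem integral_integral_mul_eq_integral_sq (hH : MemLp H 2 (μ.prod ν)) :
    ∫ p, ∫ s, H (p.1, s) * H (p.2, s) ∂ν ∂(μ.prod μ) = ∫ s, (∫ x, H (x, s) ∂μ) ^ 2 ∂ν := by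
  have hK := integrable_mul_of_memLp_two hH
  rw [← integral_prod _ hK, integral_prod_symm _ hK]
  simp only [sq, ← integral_prod_mul]

theorem ae_integral_eq_zero_of_integral_integral_mul_eq_zero (hH : MemLp H 2 (μ.prod ν))
    (h : ∫ p, ∫ s, H (p.1, s) * H (p.2, s) ∂ν ∂(μ.prod μ) = 0) :
    ∀ᵐ s ∂ν, ∫ x, H (x, s) ∂μ = 0 := by
  rw [integral_integral_mul_eq_integral_sq hH] at h
  have hint : Integrable (fun s => (∫ x, H (x, s) ∂μ) ^ 2) ν := by
    simpa only [sq, ← integral_prod_mul] using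
      (integrable_mul_of_memLp_two hH).integral_prod_right
  filter_upwards [(integral_eq_zero_iff_of_nonneg (fun s => sq_nonneg _) hint).1 h] with s hs
  exact pow_eq_zero_iff two_ne_zero |>.1 hs

end Gram

section PiSystem

variable {α E : Type*} [MeasurableSpace α] [NormedAddCommGroup E] [NormedSpace ℝ E]
  [CompleteSpace E] {μ : Measure α} {f : α → E}

theorem MeasureTheory.Integrable.ae_eq_zero_of_forall_setIntegral_isPiSystem
    {C : Set (Set α)} (hgen : ‹MeasurableSpace α› = MeasurableSpace.generateFrom C)
    (hC : IsPiSystem C) (huniv : Set.univ ∈ C) (hf : Integrable f μ)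
    (h : ∀ s ∈ C, ∫ x in s, f x ∂μ = 0) : f =ᵐ[μ] 0 := by
  suffices hall : ∀ s, MeasurableSet s → ∫ x in s, f x ∂μ = 0 from
    hf.ae_eq_zero_of_forall_setIntegral_eq_zero fun s hs _ => hall s hs
  intro s hs
  induction s, hs using MeasurableSpace.induction_on_inter hgen hC with
  | empty => simp
  | basic t ht => exact h t ht
  | compl t ht iht =>
    have := integral_add_compl ht hf
    rw [iht, zero_add] at this
    rw [this, ← setIntegral_univ, h _ huniv]
  | iUnion t hdisj ht iht => simp [integral_iUnion ht hdisj hf.integrableOn, iht]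

theorem MeasureTheory.Integrable.ae_eq_zero_of_forall_setIntegral_pi_prod
    {ι β : Type*} [Finite ι] {X : ι → Type*} [∀ i, MeasurableSpace (X i)] [MeasurableSpace β]
    {μ : Measure ((∀ i, X i) × β)} {f : (∀ i, X i) × β → E} (hf : Integrable f μ)
    (h : ∀ B : ∀ i, Set (X i), (∀ i, MeasurableSet (B i)) → ∀ t : Set β, MeasurableSet t →
      ∫ p in Set.univ.pi B ×ˢ t, f p ∂μ = 0) :
    f =ᵐ[μ] 0 := by
  have hbox : Set.univ ∈ Set.univ.pi '' Set.univ.pi fun i => {s : Set (X i) | MeasurableSet s} :=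
    ⟨fun _ => Set.univ, fun _ _ => .univ, Set.pi_univ _⟩
  refine hf.ae_eq_zero_of_forall_setIntegral_isPiSystem
    (generateFrom_eq_prod generateFrom_pi MeasurableSpace.generateFrom_measurableSet
      ⟨fun _ => Set.univ, fun _ => hbox, Set.iUnion_const _⟩
      isCountablySpanning_measurableSet).symm
    (isPiSystem_pi.prod MeasurableSpace.isPiSystem_measurableSet)
    ⟨_, hbox, _, .univ, Set.univ_prod_univ⟩ ?_
  rintro _ ⟨_, ⟨B, hB, rfl⟩, t, ht, rfl⟩
  exact h B (fun i => hB i (Set.mem_univ i)) t ht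

theorem setIntegral_pi_prod_eq_integral_mul_prod_indicator {ι T : Type*} [Fintype ι]
    [MeasurableSpace T] {μ : Measure (ι → ℝ)} [SFinite μ] {ν : Measure T} [SFinite ν]
    {G : (ι → ℝ) × T → ℝ} {B : ι → Set ℝ} (hB : ∀ i, MeasurableSet (B i)) (t : Set T) :
    ∫ p in Set.univ.pi B ×ˢ t, G p ∂μ.prod ν =
      ∫ p, G p * ∏ i, (B i).indicator 1 (p.1 i) ∂μ.prod (ν.restrict t) := by
  classical
  have hrestrict : (μ.restrict (Set.univ.pi B)).prod (ν.restrict t) =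
      (μ.prod (ν.restrict t)).restrict (Set.univ.pi B ×ˢ Set.univ) := by
    rw [← Measure.prod_restrict, Measure.restrict_univ]
  rw [← Measure.prod_restrict, hrestrict,
    ← integral_indicator ((MeasurableSet.univ_pi hB).prod .univ)]
  refine integral_congr_ae (ae_of_all _ fun p => ?_)
  have hbox := Set.indicator_pi_one_apply (M₀ := ℝ) Finset.univ B p.1
  rw [Finset.coe_univ] at hbox
  dsimp only
  rw [← hbox]
  by_cases h : p.1 ∈ Set.univ.pi B <;> simp [Set.indicator, h]

end PiSystem

section Symmetrize

variable {μ : Measure ℝ} [SigmaFinite μ] {n : ℕ}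

theorem integral_comp_perm (σ : Equiv.Perm (Fin n)) (f : (Fin n → ℝ) → ℝ) :
    ∫ z, f (z ∘ σ) ∂(Measure.pi fun _ => μ) = ∫ z, f z ∂(Measure.pi fun _ => μ) :=
  (measurePreserving_comp_perm μ σ).integral_comp
    (MeasurableEquiv.arrowCongr' σ.symm (.refl ℝ)).measurableEmbedding f

theorem symmetrize_ae_eq_zero {F : (Fin n → ℝ) → ℝ} (hF : F =ᵐ[Measure.pi fun _ => μ] 0) :
    symmetrize n F =ᵐ[Measure.pi fun _ => μ] 0 := by
  have hperm : ∀ᵐ z ∂(Measure.pi fun _ => μ), ∀ σ : Equiv.Perm (Fin n), F (z ∘ σ) = 0 :=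
    ae_all_iff.2 fun σ => (measurePreserving_comp_perm μ σ).quasiMeasurePreserving.ae hF
  filter_upwards [hperm] with z hz
  simp [symmetrize, hz]

theorem integral_mul_eq_zero_of_symmetrize_ae_eq_zero {F W : (Fin n → ℝ) → ℝ}
    (hF : symmetrize n F =ᵐ[Measure.pi fun _ => μ] 0)
    (hW : ∀ (σ : Equiv.Perm (Fin n)) z, W (z ∘ σ) = W z)
    (hFW : Integrable (fun z => F z * W z) (Measure.pi fun _ => μ)) :
    ∫ z, F z * W z ∂(Measure.pi fun _ => μ) = 0 := by
  have hσ (σ : Equiv.Perm (Fin n)) :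
      ∫ z, F (z ∘ σ) * W z ∂(Measure.pi fun _ => μ) = ∫ z, F z * W z ∂(Measure.pi fun _ => μ) := by
    simpa only [hW] using integral_comp_perm σ fun z => F z * W z
  calc ∫ z, F z * W z ∂(Measure.pi fun _ => μ)
      = (n.factorial : ℝ)⁻¹ * ∑ σ : Equiv.Perm (Fin n),
          ∫ z, F (z ∘ σ) * W z ∂(Measure.pi fun _ => μ) := by
        simp only [hσ, Finset.sum_const, Finset.card_univ, Fintype.card_perm, Fintype.card_fin,
          nsmul_eq_mul]
        field_simp
    _ = ∫ z, symmetrize n F z * W z ∂(Measure.pi fun _ => μ) := by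
        simp only [symmetrize, mul_assoc, Finset.sum_mul]
        rw [integral_const_mul, integral_finsetSum]
        intro σ _
        refine ((measurePreserving_comp_perm μ σ).integrable_comp_emb
          (MeasurableEquiv.arrowCongr' σ.symm (.refl ℝ)).measurableEmbedding |>.2 hFW).congr
          (ae_of_all _ fun z => ?_)
        simp only [Function.comp_apply, hW]
    _ = 0 := integral_eq_zero_of_ae (by filter_upwards [hF] with z hz; simp [hz])

end Symmetrize

theorem splice_eq_piFinSplit_symm {N k : ℕ} (hk : k ≤ N) (x : Fin (N - k) → ℝ)
    (u : Fin k → ℝ) :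
    splice N k x u = (MeasurableEquiv.piFinSplit ℝ (Nat.sub_add_cancel hk)).symm (x, u) := by
  apply (MeasurableEquiv.piFinSplit ℝ (Nat.sub_add_cancel hk)).injective
  rw [MeasurableEquiv.apply_symm_apply]
  ext j
  · simp [piFinSplit_apply_fst, splice]
  · simp [piFinSplit_apply_snd, splice]

theorem splice_zero {N : ℕ} (x : Fin (N - 0) → ℝ) (u : Fin 0 → ℝ) : splice N 0 x u = x := by
  funext i
  simp [splice]

theorem measurePreserving_splice_prod {N k : ℕ} (hk : k ≤ N) :
    MeasurePreserving
      (fun q : (Fin (N - k) → ℝ) × ℝ × (Fin k → ℝ) => (splice N k q.1 q.2.2, q.2.1))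
      ((cubeMeas (N - k)).prod (unifMeas.prod (cubeMeas k))) ((cubeMeas N).prod unifMeas) := by
  have h := ((measurePreserving_piFinSplit unifMeas (Nat.sub_add_cancel hk)).symm _ |>.prod
    (.id unifMeas)).comp <| (measurePreserving_prodAssoc _ _ _).symm MeasurableEquiv.prodAssoc
    |>.comp ((MeasurePreserving.id (cubeMeas (N - k))).prod Measure.measurePreserving_swap)
  convert h using 1
  · funext q
    simp only [splice_eq_piFinSplit_symm hk]
    rfl
  all_goals rfl

theorem contrInt_zero_apply {N : ℕ} (g : (Fin N → ℝ) → ℝ → ℝ) (z : Fin (2 * N) → ℝ) :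
    contrInt N 0 g z = ∫ s, g (MeasurableEquiv.piFinSplit ℝ (two_mul N).symm z).1 s *
      g (MeasurableEquiv.piFinSplit ℝ (two_mul N).symm z).2 s ∂unifMeas := by
  simp only [contrInt, splice_zero, integral_unique, probReal_univ, one_smul]
  rfl

section Kernel

variable {N : ℕ} {g : (Fin N → ℝ) → ℝ → ℝ}

theorem ae_integral_mul_prod_eq_zero
    (hL2 : MemLp (Function.uncurry g) 2 ((cubeMeas N).prod unifMeas))
    (h0 : symmetrize (2 * N) (contrInt N 0 g) =ᵐ[cubeMeas (2 * N)] 0) {w : ℝ → ℝ}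
    (hw : Measurable w) {C : ℝ} (hC : ∀ t, |w t| ≤ C) :
    ∀ᵐ s ∂unifMeas, ∫ x, g x s * ∏ i, w (x i) ∂cubeMeas N = 0 := by
  have hprod : Measurable fun x : Fin N → ℝ => ∏ i, w (x i) :=
    Finset.measurable_prod _ fun i _ => hw.comp (measurable_pi_apply i)
  have hH : MemLp (fun p : (Fin N → ℝ) × ℝ => g p.1 p.2 * ∏ i, w (p.1 i)) 2
      ((cubeMeas N).prod unifMeas) :=
    (memLp_top_of_bound (hprod.comp measurable_fst).aestronglyMeasurable (C ^ N)
      (ae_of_all _ fun p => by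
        simpa only [Function.comp_apply, Real.norm_eq_abs, Fintype.card_fin] using
          abs_prod_le_pow fun i => hC (p.1 i))).mul' hL2
  refine ae_integral_eq_zero_of_integral_integral_mul_eq_zero hH ?_
  set e := MeasurableEquiv.piFinSplit ℝ (two_mul N).symm
  have he : MeasurePreserving e (cubeMeas (2 * N)) ((cubeMeas N).prod (cubeMeas N)) :=
    measurePreserving_piFinSplit unifMeas _
  have hcontr (z : Fin (2 * N) → ℝ) : contrInt N 0 g z * ∏ i, w (z i) =
      ∫ s, (g (e z).1 s * ∏ i, w ((e z).1 i)) * (g (e z).2 s * ∏ i, w ((e z).2 i)) ∂unifMeas := by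
    rw [contrInt_zero_apply, prod_piFinSplit (two_mul N).symm w z, ← integral_mul_const]
    congr 1 with s
    simp only [e]
    ring
  have hint := (integrable_mul_of_memLp_two hH).integral_prod_left
  rw [← he.integral_comp e.measurableEmbedding]
  dsimp only at hint ⊢
  rw [← integral_congr_ae (ae_of_all _ hcontr)]
  refine integral_mul_eq_zero_of_symmetrize_ae_eq_zero h0
    (fun σ z => Equiv.prod_comp σ fun i => w (z i)) ?_
  exact (integrable_congr (ae_of_all _ hcontr)).2 <|
    (he.integrable_comp_emb e.measurableEmbedding).2 hint

theorem integrable_prod_restrict_of_memLp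
    (hL2 : MemLp (Function.uncurry g) 2 ((cubeMeas N).prod unifMeas)) (J : Set ℝ) :
    Integrable (fun p : (Fin N → ℝ) × ℝ => g p.1 p.2) ((cubeMeas N).prod (unifMeas.restrict J)) :=
  (hL2.integrable one_le_two).mono_measure (Measure.prod_mono le_rfl Measure.restrict_le_self)

theorem integral_mul_prod_eq_zero
    (hL2 : MemLp (Function.uncurry g) 2 ((cubeMeas N).prod unifMeas))
    (h0 : symmetrize (2 * N) (contrInt N 0 g) =ᵐ[cubeMeas (2 * N)] 0) {w : ℝ → ℝ}
    (hw : Measurable w) {C : ℝ} (hC : ∀ t, |w t| ≤ C) (J : Set ℝ) :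
    ∫ p, g p.1 p.2 * ∏ i, w (p.1 i) ∂(cubeMeas N).prod (unifMeas.restrict J) = 0 := by
  rw [integral_prod_symm _
    ((integrable_prod_restrict_of_memLp hL2 J).mul_prod_of_bdd (fun _ => hw) fun _ => hC)]
  exact integral_eq_zero_of_ae (ae_restrict_of_ae (ae_integral_mul_prod_eq_zero hL2 h0 hw hC))

theorem integral_mul_prod_comp_perm
    (hsym : ∀ (σ : Equiv.Perm (Fin N)) (x : Fin N → ℝ) (s : ℝ), g (x ∘ σ) s = g x s)
    (ν : Measure ℝ) [SFinite ν] (u : Fin N → ℝ → ℝ) (σ : Equiv.Perm (Fin N)) :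
    ∫ p, g p.1 p.2 * ∏ i, u (σ i) (p.1 i) ∂(cubeMeas N).prod ν =
      ∫ p, g p.1 p.2 * ∏ i, u i (p.1 i) ∂(cubeMeas N).prod ν := by
  have he : MeasurePreserving ((MeasurableEquiv.arrowCongr' σ (.refl ℝ)).prodCongr (.refl ℝ))
      ((cubeMeas N).prod ν) ((cubeMeas N).prod ν) :=
    (measurePreserving_comp_perm unifMeas σ.symm).prod (.id _)
  refine (integral_congr_ae (ae_of_all _ fun p => ?_)).trans (he.integral_comp' _)
  change _ = g (p.1 ∘ σ.symm) p.2 * ∏ i, u i (p.1 (σ.symm i))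
  rw [hsym, ← Equiv.prod_comp σ fun i => u i (p.1 (σ.symm i))]
  simp only [Equiv.symm_apply_apply]

theorem setIntegral_pi_prod_eq_zero
    (hL2 : MemLp (Function.uncurry g) 2 ((cubeMeas N).prod unifMeas))
    (hsym : ∀ (σ : Equiv.Perm (Fin N)) (x : Fin N → ℝ) (s : ℝ), g (x ∘ σ) s = g x s)
    (h0 : symmetrize (2 * N) (contrInt N 0 g) =ᵐ[cubeMeas (2 * N)] 0)
    {B : Fin N → Set ℝ} (hB : ∀ i, MeasurableSet (B i)) (J : Set ℝ) :
    ∫ p in Set.univ.pi B ×ˢ J, Function.uncurry g p ∂(cubeMeas N).prod unifMeas = 0 := by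
  classical
  set T : (Fin N → Fin N) → ℝ := fun m =>
    ∫ p, g p.1 p.2 * ∏ i, (B (m i)).indicator 1 (p.1 i) ∂(cubeMeas N).prod (unifMeas.restrict J)
  have hsum (S : Finset (Fin N)) : ∑ m ∈ Fintype.piFinset fun _ => S, T m = 0 := by
    have hw : Measurable fun t => ∑ j ∈ S, (B j).indicator (1 : ℝ → ℝ) t :=
      Finset.measurable_sum _ fun j _ => measurable_one.indicator (hB j)
    have hC (t : ℝ) : |∑ j ∈ S, (B j).indicator (1 : ℝ → ℝ) t| ≤ S.card :=
      (Finset.abs_sum_le_sum_abs _ _).trans <| by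
        simpa using Finset.sum_le_sum fun j (_ : j ∈ S) => abs_indicator_one_le (B j) t
    have hexp (x : Fin N → ℝ) : ∏ i, ∑ j ∈ S, (B j).indicator 1 (x i) =
        ∑ m ∈ Fintype.piFinset fun _ => S, ∏ i, (B (m i)).indicator (1 : ℝ → ℝ) (x i) :=
      Finset.prod_univ_sum _ _
    rw [← integral_finsetSum _ fun (m : Fin N → Fin N) _ =>
      (integrable_prod_restrict_of_memLp hL2 J).mul_prod_of_bdd
        (fun i => measurable_one.indicator (hB (m i))) fun i => abs_indicator_one_le _]
    simp only [← Finset.mul_sum, ← hexp]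
    exact integral_mul_prod_eq_zero hL2 h0 hw hC J
  have hperm (σ : Equiv.Perm (Fin N)) : T σ = T id :=
    integral_mul_prod_comp_perm hsym _ (fun i => (B i).indicator 1) σ
  have hid : T id = 0 := by
    simpa [hperm, Nat.factorial_ne_zero] using
      Finset.sum_perm_eq_zero_of_sum_piFinset_eq_zero T hsum
  rw [setIntegral_pi_prod_eq_integral_mul_prod_indicator hB]
  exact hid

theorem contrInt_ae_eq_zero {k : ℕ} (hg : Function.uncurry g =ᵐ[(cubeMeas N).prod unifMeas] 0)
    (hk : k ≤ N) : contrInt N k g =ᵐ[cubeMeas (2 * (N - k))] 0 := by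
  have hx : ∀ᵐ x ∂cubeMeas (N - k), ∀ᵐ s ∂unifMeas, ∀ᵐ u ∂cubeMeas k,
      g (splice N k x u) s = 0 := by
    filter_upwards [Measure.ae_ae_of_ae_prod
      ((measurePreserving_splice_prod hk).quasiMeasurePreserving.ae hg)] with x hx
    exact Measure.ae_ae_of_ae_prod hx
  have hfst : MeasurePreserving
      (fun z => (MeasurableEquiv.piFinSplit ℝ (two_mul (N - k)).symm z).1)
      (cubeMeas (2 * (N - k))) (cubeMeas (N - k)) :=
    measurePreserving_fst.comp (measurePreserving_piFinSplit unifMeas _)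
  filter_upwards [hfst.quasiMeasurePreserving.ae hx] with z hz
  refine integral_eq_zero_of_ae ?_
  filter_upwards [hz] with s hs
  refine integral_eq_zero_of_ae ?_
  filter_upwards [hs] with u hu
  exact mul_eq_zero_of_left hu _

end Kernel

theorem stmt_12_general (N : ℕ) (g : (Fin N → ℝ) → ℝ → ℝ)
    (hL2 : MemLp (Function.uncurry g) 2 ((cubeMeas N).prod unifMeas))
    (hsym : ∀ (σ : Equiv.Perm (Fin N)) (x : Fin N → ℝ) (s : ℝ), g (x ∘ σ) s = g x s)
    (h0 : ∀ᵐ z ∂(cubeMeas (2 * (N - 0))), symmetrize _ (contrInt N 0 g) z = 0) :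
    ∀ k, 1 ≤ k → k ≤ N - 1 →
      ∀ᵐ z ∂(cubeMeas (2 * (N - k))), symmetrize _ (contrInt N k g) z = 0 := by
  intro k _ hk
  have hg : Function.uncurry g =ᵐ[(cubeMeas N).prod unifMeas] 0 :=
    (hL2.integrable one_le_two).ae_eq_zero_of_forall_setIntegral_pi_prod
      fun _ hB J _ => setIntegral_pi_prod_eq_zero hL2 hsym h0 hB J
  exact symmetrize_ae_eq_zero (contrInt_ae_eq_zero hg (by omega))

/-- Let `g ∈ L²([0,1]^{N+1})` be symmetric in its first `N` variables. If the symmetrized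
contraction `∫₀¹ g(·,s) ⊗̃ g(·,s) ds` vanishes a.e. on `[0,1]^{2N}`, then for every
`k = 1, …, N-1` the symmetrized `k`-th contraction `∫₀¹ g(·,s) ⊗̃_k g(·,s) ds` vanishes
a.e. on `[0,1]^{2N-2k}`. -/
theorem stmt_12 (N : ℕ) (hN : 1 ≤ N) (g : (Fin N → ℝ) → ℝ → ℝ)
    (hmeas : Measurable (Function.uncurry g))
    (hL2 : MemLp (Function.uncurry g) 2 ((cubeMeas N).prod unifMeas))
    (hsym : ∀ (σ : Equiv.Perm (Fin N)) (x : Fin N → ℝ) (s : ℝ), g (x ∘ σ) s = g x s)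
    (h0 : ∀ᵐ z ∂(cubeMeas (2 * (N - 0))), symmetrize _ (contrInt N 0 g) z = 0) :
    ∀ k, 1 ≤ k → k ≤ N - 1 →
      ∀ᵐ z ∂(cubeMeas (2 * (N - k))), symmetrize _ (contrInt N k g) z = 0 :=
  stmt_12_general N g hL2 hsym h0
end
end
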